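/- arXiv:1610.02153 — 5 statements merged into one kernel-verified Lean document; each statement's English description precedes it below -/
import Mathlib

section
/- Let Q be an n×n Hermitian matrix, P an arbitrary n×n matrix, r ∈ ℂⁿ, and z = E + iη with η > 0. Then |tr(((Q - zI)⁻¹ - (Q + r r* - zI)⁻¹) P)| ≤ ‖P‖/η, where ‖P‖ is the operator norm. -/
/-!
Sherman–Morrison gives `tr((A⁻¹ - (A + r r*)⁻¹) P) = r* A⁻¹ P A⁻¹ r / (1 + r* A⁻¹ r)` for
`A = Q - z`. With `u = A⁻¹ r` and `v = A⁻ᴴ r` the numerator is `v* P u`, of modulus at most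
`‖P‖ ‖u‖ ‖v‖`. The number `r* A⁻¹ r` equals both `u* Aᴴ u` and `v* Aᴴ v`, and since `Q` is
Hermitian their imaginary parts are `η ‖u‖²` and `η ‖v‖²`. So `‖u‖ = ‖v‖` and
`|1 + r* A⁻¹ r| ≥ η ‖u‖ ‖v‖`.
-/

open Matrix WithLp
open scoped ComplexOrder

section ShermanMorrison

variable {n K : Type*} [Fintype n] [DecidableEq n] [Field K] {A : Matrix n n K} (r s : n → K)

theorem vecMul_nonsing_inv_eq_smul_vecMul_nonsing_inv_add_vecMulVec (hA : IsUnit A.det)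
    (hB : IsUnit (A + vecMulVec r s).det) :
    s ᵥ* A⁻¹ = (1 + s ⬝ᵥ A⁻¹ *ᵥ r) • (s ᵥ* (A + vecMulVec r s)⁻¹) := by
  have hAB : (s ᵥ* A⁻¹) ᵥ* (A + vecMulVec r s) = (1 + s ⬝ᵥ A⁻¹ *ᵥ r) • s := by
    rw [vecMul_add, vecMul_vecMul, nonsing_inv_mul _ hA, vecMul_one, vecMul_vecMulVec,
      ← dotProduct_mulVec, add_smul, one_smul]
  rw [← smul_vecMul, ← hAB, vecMul_vecMul, mul_nonsing_inv _ hB, vecMul_one]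

theorem one_add_dotProduct_nonsing_inv_mulVec_ne_zero (hA : IsUnit A.det)
    (hB : IsUnit (A + vecMulVec r s).det) : 1 + s ⬝ᵥ A⁻¹ *ᵥ r ≠ 0 := by
  intro h
  have hs := vecMul_nonsing_inv_eq_smul_vecMul_nonsing_inv_add_vecMulVec r s hA hB
  rw [h, zero_smul] at hs
  rw [dotProduct_mulVec, hs, zero_dotProduct, add_zero] at h
  exact one_ne_zero h

theorem vecMul_nonsing_inv_add_vecMulVec (hA : IsUnit A.det)
    (hB : IsUnit (A + vecMulVec r s).det) :
    s ᵥ* (A + vecMulVec r s)⁻¹ = (1 + s ⬝ᵥ A⁻¹ *ᵥ r)⁻¹ • (s ᵥ* A⁻¹) := by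
  rw [vecMul_nonsing_inv_eq_smul_vecMul_nonsing_inv_add_vecMulVec r s hA hB, smul_smul,
    inv_mul_cancel₀ (one_add_dotProduct_nonsing_inv_mulVec_ne_zero r s hA hB), one_smul]

theorem trace_nonsing_inv_sub_nonsing_inv_add_vecMulVec_mul (hA : IsUnit A.det)
    (hB : IsUnit (A + vecMulVec r s).det) (P : Matrix n n K) :
    trace ((A⁻¹ - (A + vecMulVec r s)⁻¹) * P)
      = (s ᵥ* A⁻¹) ⬝ᵥ P *ᵥ (A⁻¹ *ᵥ r) / (1 + s ⬝ᵥ A⁻¹ *ᵥ r) := by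
  have hunits : IsUnit A ↔ IsUnit (A + vecMulVec r s) := by
    simp only [isUnit_iff_isUnit_det, hA, hB]
  rw [inv_sub_inv hunits, add_sub_cancel_left, mul_vecMulVec, vecMulVec_mul, vecMulVec_mul,
    vecMul_nonsing_inv_add_vecMulVec r s hA hB, smul_vecMul, vecMulVec_smul, trace_smul,
    trace_vecMulVec, smul_eq_mul, dotProduct_comm (A⁻¹ *ᵥ r), dotProduct_mulVec (s ᵥ* A⁻¹) P,
    div_eq_inv_mul]

end ShermanMorrison

section StarField

variable {n K : Type*} [Fintype n] [DecidableEq n] [Field K] [StarRing K] (M : Matrix n n K)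
  (r : n → K)

theorem star_conjTranspose_nonsing_inv_mulVec : star ((Mᴴ)⁻¹ *ᵥ r) = star r ᵥ* M⁻¹ := by
  rw [star_mulVec, conjTranspose_nonsing_inv, conjTranspose_conjTranspose]

variable {M}

theorem star_dotProduct_nonsing_inv_mulVec_eq (hM : IsUnit M.det) :
    star r ⬝ᵥ M⁻¹ *ᵥ r = star (M⁻¹ *ᵥ r) ⬝ᵥ Mᴴ *ᵥ (M⁻¹ *ᵥ r) := by
  have hr : M *ᵥ (M⁻¹ *ᵥ r) = r := by rw [mulVec_mulVec, mul_nonsing_inv _ hM, one_mulVec]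
  rw [dotProduct_mulVec _ Mᴴ, ← star_mulVec, hr]

theorem star_dotProduct_nonsing_inv_mulVec_eq' (hM : IsUnit M.det) :
    star r ⬝ᵥ M⁻¹ *ᵥ r = star ((Mᴴ)⁻¹ *ᵥ r) ⬝ᵥ Mᴴ *ᵥ ((Mᴴ)⁻¹ *ᵥ r) := by
  have hMH : IsUnit Mᴴ.det := by rw [det_conjTranspose]; exact hM.star
  rw [mulVec_mulVec, mul_nonsing_inv _ hMH, one_mulVec, star_conjTranspose_nonsing_inv_mulVec,
    dotProduct_mulVec]

end StarField

section Euclidean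

variable {n 𝕜 : Type*} [Fintype n] [RCLike 𝕜]

theorem star_dotProduct_self_eq_norm_sq (w : n → 𝕜) :
    star w ⬝ᵥ w = (‖toLp 2 w‖ : 𝕜) ^ 2 := by
  rw [dotProduct_comm, ← EuclideanSpace.inner_toLp_toLp, inner_self_eq_norm_sq_to_K]

theorem norm_star_dotProduct_mulVec_le [DecidableEq n] (P : Matrix n n 𝕜) (x y : n → 𝕜) :
    ‖star x ⬝ᵥ P *ᵥ y‖ ≤ ‖toEuclideanCLM (𝕜 := 𝕜) P‖ * ‖toLp 2 x‖ * ‖toLp 2 y‖ := by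
  rw [dotProduct_comm, ← EuclideanSpace.inner_toLp_toLp, ← toEuclideanCLM_toLp]
  calc _ ≤ ‖toLp 2 x‖ * ‖toEuclideanCLM (𝕜 := 𝕜) P (toLp 2 y)‖ := norm_inner_le_norm _ _
    _ ≤ ‖toLp 2 x‖ * (‖toEuclideanCLM (𝕜 := 𝕜) P‖ * ‖toLp 2 y‖) := by
      gcongr; exact ContinuousLinearMap.le_opNorm _ _
    _ = _ := by ring

end Euclidean

theorem Matrix.IsHermitian.conjTranspose_sub_smul_one {n : Type*} [DecidableEq n]
    {Q : Matrix n n ℂ} (hQ : Q.IsHermitian) (z : ℂ) : (Q - z • 1)ᴴ = Q - star z • 1 := by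
  rw [conjTranspose_sub, conjTranspose_smul, conjTranspose_one, hQ.eq]

section Hermitian

variable {n : Type*} [Fintype n] [DecidableEq n] {Q : Matrix n n ℂ}

theorem Matrix.IsHermitian.im_star_dotProduct_sub_smul_one_mulVec (hQ : Q.IsHermitian) (z : ℂ)
    (w : n → ℂ) : (star w ⬝ᵥ (Q - z • 1) *ᵥ w).im = -z.im * ‖toLp 2 w‖ ^ 2 := by
  have hQw : (star w ⬝ᵥ Q *ᵥ w).im = 0 := hQ.im_star_dotProduct_mulVec_self w
  rw [sub_mulVec, smul_mulVec, one_mulVec, dotProduct_sub, dotProduct_smul,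
    star_dotProduct_self_eq_norm_sq, RCLike.ofReal_eq_complex_ofReal, Complex.sub_im, hQw,
    smul_eq_mul, ← Complex.ofReal_pow, Complex.im_mul_ofReal, zero_sub, neg_mul]

theorem Matrix.IsHermitian.isUnit_det_sub_smul_one (hQ : Q.IsHermitian) {z : ℂ}
    (hz : z.im ≠ 0) : IsUnit (Q - z • 1).det := by
  rw [isUnit_iff_ne_zero, Ne, ← exists_mulVec_eq_zero_iff]
  rintro ⟨w, hw0, hw⟩
  have him := hQ.im_star_dotProduct_sub_smul_one_mulVec z w
  rw [hw, dotProduct_zero, Complex.zero_im, eq_comm, mul_eq_zero, neg_eq_zero] at him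
  have : ‖toLp 2 w‖ = 0 := pow_eq_zero_iff two_ne_zero |>.mp (him.resolve_left hz)
  exact hw0 (by simpa using this)

end Hermitian

theorem norm_star_dotProduct_mulVec_div_le {n : Type*} [Fintype n] [DecidableEq n] {η : ℝ}
    (hη : 0 < η) (P : Matrix n n ℂ) {u v : n → ℂ} {d : ℂ} (hu : d.im = η * ‖toLp 2 u‖ ^ 2)
    (hv : d.im = η * ‖toLp 2 v‖ ^ 2) :
    ‖star v ⬝ᵥ P *ᵥ u / d‖ ≤ ‖toEuclideanCLM (𝕜 := ℂ) P‖ / η := by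
  have huv : ‖toLp 2 v‖ = ‖toLp 2 u‖ := by
    rw [← sq_eq_sq₀ (norm_nonneg _) (norm_nonneg _)]
    exact mul_left_cancel₀ hη.ne' (hv.symm.trans hu)
  have hd : η * (‖toLp 2 v‖ * ‖toLp 2 u‖) ≤ ‖d‖ := by
    rw [huv, ← sq, ← hu]; exact Complex.im_le_norm d
  rw [norm_div]
  rcases (norm_nonneg d).eq_or_lt with hd0 | hdpos
  · rw [← hd0, div_zero]; positivity
  rw [div_le_div_iff₀ hdpos hη]
  calc ‖star v ⬝ᵥ P *ᵥ u‖ * η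
      ≤ ‖toEuclideanCLM (𝕜 := ℂ) P‖ * ‖toLp 2 v‖ * ‖toLp 2 u‖ * η := by
        gcongr; exact norm_star_dotProduct_mulVec_le P v u
    _ ≤ ‖toEuclideanCLM (𝕜 := ℂ) P‖ * ‖d‖ := by
        rw [mul_assoc _ ‖toLp 2 v‖, mul_assoc, mul_comm _ η]; gcongr

/-- Rank-one perturbation of the resolvent of a Hermitian matrix: the trace against any
matrix `P` changes by at most `‖P‖ / η` where `η = Im z > 0` and `‖P‖` is the operator norm. -/
theorem trace_resolvent_rank_one_perturbation (n : ℕ) (Q P : Matrix (Fin n) (Fin n) ℂ)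
    (hQ : Q.IsHermitian) (r : Fin n → ℂ) (z : ℂ) (hz : 0 < z.im) :
    ‖Matrix.trace
        (((Q - z • (1 : Matrix (Fin n) (Fin n) ℂ))⁻¹
          - (Q + vecMulVec r (star r) - z • (1 : Matrix (Fin n) (Fin n) ℂ))⁻¹) * P)‖
      ≤ ‖Matrix.toEuclideanCLM (𝕜 := ℂ) P‖ / z.im := by
  set A := Q - z • (1 : Matrix (Fin n) (Fin n) ℂ)
  have hA : IsUnit A.det := hQ.isUnit_det_sub_smul_one hz.ne'
  have hB : IsUnit (A + vecMulVec r (star r)).det := by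
    rw [← add_sub_right_comm]
    exact (hQ.add (posSemidef_vecMulVec_self_star r).isHermitian).isUnit_det_sub_smul_one hz.ne'
  have hform (w : Fin n → ℂ) : (star w ⬝ᵥ Aᴴ *ᵥ w).im = z.im * ‖toLp 2 w‖ ^ 2 := by
    rw [hQ.conjTranspose_sub_smul_one, hQ.im_star_dotProduct_sub_smul_one_mulVec, Complex.star_def,
      Complex.conj_im, neg_neg]
  rw [add_sub_right_comm, trace_nonsing_inv_sub_nonsing_inv_add_vecMulVec_mul _ _ hA hB,
    ← star_conjTranspose_nonsing_inv_mulVec]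
  refine norm_star_dotProduct_mulVec_div_le hz P ?_ ?_
  · rw [Complex.add_im, Complex.one_im, zero_add, star_dotProduct_nonsing_inv_mulVec_eq r hA, hform]
  · rw [Complex.add_im, Complex.one_im, zero_add, star_dotProduct_nonsing_inv_mulVec_eq' r hA,
      hform]
end

section
/- Let Y be an n×n complex matrix with columns y₁,…,yₙ, so that Y Y* = Σⱼ yⱼ yⱼ*. Let z ∈ ℂ with Im(z) > 0, C = Y Y* - zI, and Cⱼ = C - yⱼ yⱼ*. Then the Stieltjes transform m_n(z) = (1/n) tr(C⁻¹) satisfies z·m_n(z) = -(1/n) Σⱼ 1/(1 + yⱼ* Cⱼ⁻¹ yⱼ). -/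
/-!
Write `yⱼ` for the columns of `Y` and `C = Y Yᴴ - z`. Both `C` and `Cⱼ = C - yⱼ yⱼᴴ` are
Hermitian matrices shifted by a non-real scalar, hence invertible. Taking the trace of
`Y Yᴴ C⁻¹ = 1 + z C⁻¹` gives `n + z tr C⁻¹ = Σⱼ yⱼᴴ C⁻¹ yⱼ`, and the Sherman–Morrison formula
for the rank-one update `C = Cⱼ + yⱼ yⱼᴴ` turns each summand into `1 - 1/(1 + yⱼᴴ Cⱼ⁻¹ yⱼ)`.
-/

open Matrix

namespace Matrix

variable {n : Type*}

theorem isHermitian_vecMulVec_star {α : Type*} [Mul α] [StarMul α] (u : n → α) :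
    (vecMulVec u (star u)).IsHermitian := by
  rw [IsHermitian, conjTranspose_vecMulVec, star_star]

variable [Fintype n]

theorem trace_mul_conjTranspose_mul {m R : Type*} [Fintype m] [CommSemiring R] [StarRing R]
    (Y : Matrix n m R) (A : Matrix n n R) :
    trace (Y * Yᴴ * A) = ∑ j, star (fun i => Y i j) ⬝ᵥ A *ᵥ fun i => Y i j := by
  rw [← trace_mul_cycle Yᴴ A Y, Matrix.mul_assoc]
  rfl

variable [DecidableEq n]

theorem IsHermitian.isUnit_det_sub_smul_one_s6 {𝕜 : Type*} [RCLike 𝕜] {H : Matrix n n 𝕜}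
    (hH : H.IsHermitian) {z : 𝕜} (hz : RCLike.im z ≠ 0) : IsUnit (H - z • 1).det := by
  have hcharpoly : (z • 1 - H).det = ∏ i, (z - hH.eigenvalues i) := by
    rw [smul_one_eq_diagonal, ← scalar_apply, ← eval_charpoly, hH.charpoly_eq,
      Polynomial.eval_prod]
    simp
  rw [isUnit_iff_ne_zero, ← neg_sub, det_neg, hcharpoly]
  refine mul_ne_zero (pow_ne_zero _ (neg_ne_zero.2 one_ne_zero))
    (Finset.prod_ne_zero_iff.2 fun i _ h => hz ?_)
  simpa using congrArg RCLike.im h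

theorem trace_mul_inv_sub_smul_one {K : Type*} [Field K] {H : Matrix n n K} {z : K}
    (hHz : IsUnit (H - z • 1).det) :
    trace (H * (H - z • 1)⁻¹) = Fintype.card n + z * trace (H - z • 1)⁻¹ := by
  have h := congrArg trace (mul_nonsing_inv _ hHz)
  rw [sub_mul, smul_mul_assoc, one_mul, trace_sub, trace_smul, trace_one] at h
  rw [← h, smul_eq_mul]
  ring

theorem inv_mulVec_eq_smul_inv_add_vecMulVec_mulVec {R : Type*} [CommRing R]
    {A : Matrix n n R} {u w : n → R} (hA : IsUnit A.det) (hAuw : IsUnit (A + vecMulVec u w).det) :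
    A⁻¹ *ᵥ u = (1 + w ⬝ᵥ A⁻¹ *ᵥ u) • (A + vecMulVec u w)⁻¹ *ᵥ u := by
  have h : (A + vecMulVec u w) *ᵥ A⁻¹ *ᵥ u = (1 + w ⬝ᵥ A⁻¹ *ᵥ u) • u := by
    rw [add_mulVec, mulVec_mulVec, mul_nonsing_inv _ hA, one_mulVec, vecMulVec_mulVec,
      add_smul, one_smul, op_smul_eq_smul]
  rw [← mulVec_smul, ← h, mulVec_mulVec, nonsing_inv_mul _ hAuw, one_mulVec]

theorem dotProduct_inv_add_vecMulVec_mulVec {K : Type*} [Field K]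
    {A : Matrix n n K} {u w : n → K} (hA : IsUnit A.det) (hAuw : IsUnit (A + vecMulVec u w).det) :
    w ⬝ᵥ (A + vecMulVec u w)⁻¹ *ᵥ u = 1 - (1 + w ⬝ᵥ A⁻¹ *ᵥ u)⁻¹ := by
  have hαβ := congrArg (w ⬝ᵥ ·) (inv_mulVec_eq_smul_inv_add_vecMulVec_mulVec hA hAuw)
  simp only [dotProduct_smul, smul_eq_mul] at hαβ
  have hα : 1 + w ⬝ᵥ A⁻¹ *ᵥ u ≠ 0 := fun h => by simp [h] at hαβ; simp [hαβ] at h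
  field_simp
  linear_combination -hαβ

end Matrix

/-- With `C = Y Yᴴ - z•1` and `Cⱼ = C - yⱼ yⱼᴴ` (where `yⱼ` is the `j`-th column of `Y`),
the Stieltjes transform `m_n(z) = (1/n) tr C⁻¹` satisfies
`z m_n(z) = -(1/n) Σⱼ 1/(1 + yⱼᴴ Cⱼ⁻¹ yⱼ)`. -/
theorem stieltjes_column_decomposition (n : ℕ) (Y : Matrix (Fin n) (Fin n) ℂ)
    (z : ℂ) (hz : 0 < z.im) :
    z * ((n : ℂ)⁻¹ * Matrix.trace ((Y * Yᴴ - z • (1 : Matrix (Fin n) (Fin n) ℂ))⁻¹))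
      = -((n : ℂ)⁻¹ * ∑ j, (1 + star (fun i => Y i j) ⬝ᵥ
          ((Y * Yᴴ - z • (1 : Matrix (Fin n) (Fin n) ℂ)
            - vecMulVec (fun i => Y i j) (star (fun i => Y i j)))⁻¹).mulVec
              (fun i => Y i j))⁻¹) := by
  have hYY := isHermitian_mul_conjTranspose_self Y
  have hC : IsUnit (Y * Yᴴ - z • 1).det := hYY.isUnit_det_sub_smul_one_s6 hz.ne'
  have hcolumn (j : Fin n) :
      star (fun i => Y i j) ⬝ᵥ (Y * Yᴴ - z • 1)⁻¹ *ᵥ (fun i => Y i j) =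
        1 - (1 + star (fun i => Y i j) ⬝ᵥ (Y * Yᴴ - z • 1
          - vecMulVec (fun i => Y i j) (star (fun i => Y i j)))⁻¹ *ᵥ (fun i => Y i j))⁻¹ := by
    have hCj : IsUnit (Y * Yᴴ - z • 1 - vecMulVec (fun i => Y i j) (star fun i => Y i j)).det := by
      rw [sub_right_comm]
      exact (hYY.sub (isHermitian_vecMulVec_star _)).isUnit_det_sub_smul_one_s6 hz.ne'
    have h := dotProduct_inv_add_vecMulVec_mulVec hCj (by rwa [sub_add_cancel])
    rwa [sub_add_cancel] at h
  have htrace := trace_mul_inv_sub_smul_one hC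
  rw [trace_mul_conjTranspose_mul, Finset.sum_congr rfl fun j _ => hcolumn j,
    Finset.sum_sub_distrib, Finset.sum_const, Finset.card_fin, nsmul_one, Fintype.card_fin]
    at htrace
  linear_combination -(n : ℂ)⁻¹ * htrace
end

section
/- Let P and Q be n×n Hermitian matrices, I ⊆ {1,…,n}, and z ∈ ℂ with Im(z) > 0. Then |Σ_{k∈I} ((P - zI)⁻¹)_{kk} - Σ_{k∈I} ((Q - zI)⁻¹)_{kk}| ≤ (2/Im(z))·rank(P - Q). -/
/-!
The resolvent difference `(Q - z)⁻¹ - (P - z)⁻¹ = (Q - z)⁻¹ (P - Q) (P - z)⁻¹` has rank at most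
`rank (P - Q)`, and the resolvent of a Hermitian matrix has operator norm at most `1 / Im z`,
because `Im ⟪x, (P - z) x⟫ = -Im z ‖x‖²`. A partial diagonal sum of `M` is the trace of `D M` for a
coordinate projection `D`, and a trace is at most the rank times the operator norm: restricted to
the range, it is a sum of `rank` terms `⟪bᵢ, M bᵢ⟫` over an orthonormal basis.
-/

open scoped Matrix.Norms.L2Operator

theorem ContinuousLinearMap.norm_trace_le_finrank_range_mul_norm
    {𝕜 E : Type*} [RCLike 𝕜] [NormedAddCommGroup E] [InnerProductSpace 𝕜 E]
    [FiniteDimensional 𝕜 E] (T : E →L[𝕜] E) :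
    ‖LinearMap.trace 𝕜 E T‖ ≤ Module.finrank 𝕜 (LinearMap.range (T : E →ₗ[𝕜] E)) * ‖T‖ := by
  set b := stdOrthonormalBasis 𝕜 (LinearMap.range (T : E →ₗ[𝕜] E))
  rw [← LinearMap.trace_restrict_eq_of_forall_mem _ _
    (LinearMap.mem_range_self (T : E →ₗ[𝕜] E)), LinearMap.trace_eq_sum_inner _ b]
  calc _ ≤ ∑ _i : Fin (Module.finrank 𝕜 (LinearMap.range (T : E →ₗ[𝕜] E))), ‖T‖ :=
        norm_sum_le_of_le _ fun i _ => ?_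
    _ = _ := by simp
  calc ‖inner 𝕜 (b i : E) (T (b i))‖ ≤ ‖(b i : E)‖ * (‖T‖ * ‖(b i : E)‖) :=
        (norm_inner_le_norm _ _).trans (by gcongr; exact T.le_opNorm _)
    _ = ‖T‖ := by rw [← Submodule.coe_norm, b.norm_eq_one]; ring

theorem LinearMap.IsSymmetric.abs_im_mul_norm_le_norm_sub_smul {𝕜 E : Type*} [RCLike 𝕜]
    [NormedAddCommGroup E] [InnerProductSpace 𝕜 E] {T : E →ₗ[𝕜] E} (hT : T.IsSymmetric)
    (z : 𝕜) (x : E) : |RCLike.im z| * ‖x‖ ≤ ‖T x - z • x‖ := by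
  have him : RCLike.im (inner 𝕜 x (T x - z • x)) = -(RCLike.im z * ‖x‖ ^ 2) := by
    rw [inner_sub_right, inner_smul_right, inner_self_eq_norm_sq_to_K, map_sub,
      hT.im_inner_self_apply]
    norm_cast
    simp
  have hsq : |RCLike.im z| * ‖x‖ ^ 2 ≤ ‖x‖ * ‖T x - z • x‖ :=
    calc |RCLike.im z| * ‖x‖ ^ 2 = |RCLike.im (inner 𝕜 x (T x - z • x))| := by
          rw [him, abs_neg, abs_mul, abs_of_nonneg (sq_nonneg ‖x‖)]
      _ ≤ ‖x‖ * ‖T x - z • x‖ := (RCLike.abs_im_le_norm _).trans (norm_inner_le_norm _ _)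
  rcases (norm_nonneg x).eq_or_lt with hx | hx
  · simp [← hx]
  · nlinarith

namespace Matrix

variable {𝕜 n : Type*} [RCLike 𝕜] [Fintype n] [DecidableEq n]

theorem norm_trace_le_rank_mul_l2_opNorm (A : Matrix n n 𝕜) : ‖A.trace‖ ≤ A.rank * ‖A‖ := by
  set T := toEuclideanCLM (n := n) (𝕜 := 𝕜) A
  have htrace :
      A.trace = LinearMap.trace 𝕜 _ (T : EuclideanSpace 𝕜 n →ₗ[𝕜] EuclideanSpace 𝕜 n) := by
    rw [coe_toEuclideanCLM_eq_toEuclideanLin, toEuclideanLin_eq_toLin_orthonormal,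
      trace_toLin_eq]
  have hrank : A.rank =
      Module.finrank 𝕜 (LinearMap.range (T : EuclideanSpace 𝕜 n →ₗ[𝕜] EuclideanSpace 𝕜 n)) := by
    rw [coe_toEuclideanCLM_eq_toEuclideanLin, toEuclideanLin_eq_toLin_orthonormal,
      ← rank_eq_finrank_range_toLin]
  rw [htrace, hrank, cstar_norm_def]
  exact T.norm_trace_le_finrank_range_mul_norm

theorem norm_sum_diag_le_rank_mul_l2_opNorm (A : Matrix n n 𝕜) (I : Finset n) :
    ‖∑ k ∈ I, A k k‖ ≤ A.rank * ‖A‖ := by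
  classical
  set D : Matrix n n 𝕜 := diagonal (Set.indicator I 1)
  have hsum : ∑ k ∈ I, A k k = (D * A).trace := by
    simp [D, trace, diagonal_mul, Set.indicator_apply, Finset.sum_ite_mem]
  have hD : ‖D‖ ≤ 1 := by
    rw [l2_opNorm_diagonal]
    exact pi_norm_le_iff_of_nonneg zero_le_one |>.2 fun k => by
      by_cases hk : k ∈ I <;> simp [hk]
  calc ‖∑ k ∈ I, A k k‖ = ‖(D * A).trace‖ := by rw [hsum]
    _ ≤ (D * A).rank * ‖D * A‖ := norm_trace_le_rank_mul_l2_opNorm _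
    _ ≤ A.rank * (‖D‖ * ‖A‖) := by gcongr; exacts [rank_mul_le_right _ _, l2_opNorm_mul _ _]
    _ ≤ A.rank * ‖A‖ := by gcongr; exact mul_le_of_le_one_left (norm_nonneg _) hD

theorem rank_inv_sub_inv_le {R : Type*} [CommRing R] [StrongRankCondition R]
    {A B : Matrix n n R} (h : IsUnit A ↔ IsUnit B) : (A⁻¹ - B⁻¹).rank ≤ (B - A).rank := by
  rw [inv_sub_inv h]
  exact (rank_mul_le_left _ _).trans (rank_mul_le_right _ _)

theorem isUnit_of_mul_norm_le_norm_toEuclideanCLM {B : Matrix n n 𝕜} {c : ℝ} (hc : 0 < c)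
    (hB : ∀ x, c * ‖x‖ ≤ ‖toEuclideanCLM (n := n) (𝕜 := 𝕜) B x‖) : IsUnit B := by
  refine mulVec_injective_iff_isUnit.1 <| (injective_iff_map_eq_zero B.mulVecLin).2 fun v hv => ?_
  have hv' : toEuclideanCLM (n := n) (𝕜 := 𝕜) B (WithLp.toLp 2 v) = 0 := by
    simpa using congrArg (WithLp.toLp 2) hv
  have hle := hB (WithLp.toLp 2 v)
  rw [hv', norm_zero, ← mul_zero c] at hle
  simpa using le_of_mul_le_mul_left hle hc

theorem l2_opNorm_inv_le_of_mul_norm_le_norm_toEuclideanCLM {B : Matrix n n 𝕜} {c : ℝ} (hc : 0 < c)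
    (hB : ∀ x, c * ‖x‖ ≤ ‖toEuclideanCLM (n := n) (𝕜 := 𝕜) B x‖) : ‖B⁻¹‖ ≤ c⁻¹ := by
  have hdet := (isUnit_iff_isUnit_det B).1 (isUnit_of_mul_norm_le_norm_toEuclideanCLM hc hB)
  rw [cstar_norm_def]
  refine ContinuousLinearMap.opNorm_le_bound _ (inv_nonneg.2 hc.le) fun y => ?_
  have hinv :
      toEuclideanCLM (n := n) (𝕜 := 𝕜) B (toEuclideanCLM (n := n) (𝕜 := 𝕜) B⁻¹ y) = y := by
    rw [← mul_apply_eq_comp, ← map_mul, mul_nonsing_inv _ hdet, map_one, one_apply_eq_self]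
  rw [inv_mul_eq_div, le_div_iff₀' hc]
  simpa [hinv] using hB (toEuclideanCLM (n := n) (𝕜 := 𝕜) B⁻¹ y)

theorem IsHermitian.abs_im_mul_norm_le_norm_toEuclideanCLM_sub_smul_one {A : Matrix n n 𝕜}
    (hA : A.IsHermitian) (z : 𝕜) (x : EuclideanSpace 𝕜 n) :
    |RCLike.im z| * ‖x‖ ≤ ‖toEuclideanCLM (n := n) (𝕜 := 𝕜) (A - z • 1) x‖ := by
  have := (isSymmetric_toEuclideanLin_iff.2 hA).abs_im_mul_norm_le_norm_sub_smul z x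
  rw [← coe_toEuclideanCLM_eq_toEuclideanLin, ContinuousLinearMap.coe_coe] at this
  simpa

theorem IsHermitian.isUnit_sub_smul_one {A : Matrix n n 𝕜} (hA : A.IsHermitian) {z : 𝕜}
    (hz : RCLike.im z ≠ 0) : IsUnit (A - z • 1) :=
  isUnit_of_mul_norm_le_norm_toEuclideanCLM (abs_pos.2 hz)
    (hA.abs_im_mul_norm_le_norm_toEuclideanCLM_sub_smul_one z)

theorem IsHermitian.l2_opNorm_inv_sub_smul_one_le {A : Matrix n n 𝕜} (hA : A.IsHermitian) {z : 𝕜}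
    (hz : RCLike.im z ≠ 0) : ‖(A - z • 1)⁻¹‖ ≤ |RCLike.im z|⁻¹ :=
  l2_opNorm_inv_le_of_mul_norm_le_norm_toEuclideanCLM (abs_pos.2 hz)
    (hA.abs_im_mul_norm_le_norm_toEuclideanCLM_sub_smul_one z)

end Matrix

/-- Partial trace of the resolvent is stable under low-rank perturbation: for Hermitian
`P, Q`, an index set `I` and `Im z > 0`,
`|Σ_{k∈I} ((P - z)⁻¹)_{kk} - Σ_{k∈I} ((Q - z)⁻¹)_{kk}| ≤ (2/Im z)·rank(P - Q)`. -/
theorem partial_trace_resolvent_rank_bound (n : ℕ) (P Q : Matrix (Fin n) (Fin n) ℂ)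
    (hP : P.IsHermitian) (hQ : Q.IsHermitian) (I : Finset (Fin n)) (z : ℂ) (hz : 0 < z.im) :
    ‖(∑ k ∈ I, (P - z • (1 : Matrix (Fin n) (Fin n) ℂ))⁻¹ k k
        - ∑ k ∈ I, (Q - z • (1 : Matrix (Fin n) (Fin n) ℂ))⁻¹ k k)‖
      ≤ 2 / z.im * (P - Q).rank := by
  set RP := (P - z • (1 : Matrix (Fin n) (Fin n) ℂ))⁻¹
  set RQ := (Q - z • (1 : Matrix (Fin n) (Fin n) ℂ))⁻¹
  have hz' : RCLike.im z ≠ 0 := hz.ne'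
  have habs : |RCLike.im z| = z.im := abs_of_pos hz
  have hrank : (RQ - RP).rank ≤ (P - Q).rank := by
    simpa only [sub_sub_sub_cancel_right] using Matrix.rank_inv_sub_inv_le
      (iff_of_true (hQ.isUnit_sub_smul_one hz') (hP.isUnit_sub_smul_one hz'))
  have hnorm : ‖RQ - RP‖ ≤ 2 / z.im :=
    calc ‖RQ - RP‖ ≤ ‖RQ‖ + ‖RP‖ := norm_sub_le _ _
      _ ≤ |RCLike.im z|⁻¹ + |RCLike.im z|⁻¹ :=
        add_le_add (hQ.l2_opNorm_inv_sub_smul_one_le hz') (hP.l2_opNorm_inv_sub_smul_one_le hz')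
      _ = 2 / z.im := by rw [habs]; ring
  rw [← Finset.sum_sub_distrib, ← norm_neg, ← Finset.sum_neg_distrib, mul_comm]
  calc ‖∑ k ∈ I, -(RP k k - RQ k k)‖ = ‖∑ k ∈ I, (RQ - RP) k k‖ := by simp
    _ ≤ (RQ - RP).rank * ‖RQ - RP‖ := Matrix.norm_sum_diag_le_rank_mul_l2_opNorm _ I
    _ ≤ (P - Q).rank * (2 / z.im) := by gcongr
end

section
/- Let X₁,…,Xₙ be real random variables with |Xᵢ| ≤ Kᵢ almost surely and E[X_{i₁} X_{i₂} ⋯ X_{i_k}] = 0 for every k ≥ 1 and every increasing sequence i₁ < ⋯ < i_k. Then for every λ ∈ ℝ, E[exp(λ Σᵢ Xᵢ)] ≤ exp((λ²/2) Σᵢ Kᵢ²). -/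
/-!
For `|x| ≤ K`, convexity of `exp` bounds `exp (λ x)` by the chord through `x = ±K`,
`cosh (λ K) + (sinh (λ K) / K) x`, which is affine in `x`. Multiplying these bounds over `i`
gives a multilinear polynomial in the `Xᵢ`; expanding it, the orthogonality hypothesis kills
every term except the constant one, `∏ cosh (λ Kᵢ)`, and `cosh y ≤ exp (y² / 2)`.
-/

open MeasureTheory

namespace Real

theorem exp_mul_le_cosh_add_sinh_div_mul (t K x : ℝ) (hx : |x| ≤ K) :
    exp (t * x) ≤ cosh (t * K) + sinh (t * K) / K * x := by
  rcases (abs_nonneg x).trans hx |>.eq_or_lt with hK | hK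
  · obtain rfl : x = 0 := abs_eq_zero.mp (le_antisymm (hK ▸ hx) (abs_nonneg x))
    simp [← hK]
  obtain ⟨hxl, hxu⟩ := abs_le.mp hx
  have ha : 0 ≤ (K - x) / (2 * K) := div_nonneg (by linarith) (by positivity)
  have hb : 0 ≤ (K + x) / (2 * K) := div_nonneg (by linarith) (by positivity)
  have hab : (K - x) / (2 * K) + (K + x) / (2 * K) = 1 := by field_simp; ring
  have hconv := convexOn_exp.2 (Set.mem_univ (-(t * K))) (Set.mem_univ (t * K)) ha hb hab
  have hchord : (K - x) / (2 * K) * -(t * K) + (K + x) / (2 * K) * (t * K) = t * x := by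
    field_simp; ring
  simp only [smul_eq_mul, hchord] at hconv
  calc exp (t * x) ≤ (K - x) / (2 * K) * exp (-(t * K)) + (K + x) / (2 * K) * exp (t * K) :=
        hconv
    _ = cosh (t * K) + sinh (t * K) / K * x := by
        rw [cosh_eq, sinh_eq]; field_simp; ring

theorem prod_cosh_mul_le_exp {ι : Type*} (s : Finset ι) (t : ℝ) (K : ι → ℝ) :
    ∏ i ∈ s, cosh (t * K i) ≤ exp (t ^ 2 / 2 * ∑ i ∈ s, K i ^ 2) :=
  calc ∏ i ∈ s, cosh (t * K i) ≤ ∏ i ∈ s, exp ((t * K i) ^ 2 / 2) :=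
        Finset.prod_le_prod (fun i _ => (cosh_pos _).le) (fun i _ => cosh_le_exp_half_sq _)
    _ = exp (t ^ 2 / 2 * ∑ i ∈ s, K i ^ 2) := by
        rw [← exp_sum, Finset.mul_sum]
        exact congrArg exp (Finset.sum_congr rfl fun i _ => by ring)

end Real

theorem MeasureTheory.integrable_finset_prod_of_memLp_top {ι Ω : Type*} [MeasurableSpace Ω]
    {μ : Measure Ω} [IsFiniteMeasure μ] {f : ι → Ω → ℝ} (s : Finset ι)
    (hf : ∀ i ∈ s, MemLp (f i) ⊤ μ) : Integrable (fun ω => ∏ i ∈ s, f i ω) μ :=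
  (by simpa using MemLp.prod' hf : MemLp (fun ω => ∏ i ∈ s, f i ω) ⊤ μ).integrable le_top

theorem MeasureTheory.integral_prod_add_mul_eq_prod_of_integral_prod_eq_zero {ι Ω : Type*}
    [Fintype ι] [MeasurableSpace Ω] {μ : Measure Ω} [IsProbabilityMeasure μ]
    {X : ι → Ω → ℝ} (hint : ∀ s : Finset ι, Integrable (fun ω => ∏ i ∈ s, X i ω) μ)
    (horth : ∀ s : Finset ι, s.Nonempty → ∫ ω, (∏ i ∈ s, X i ω) ∂μ = 0) (a b : ι → ℝ) :
    ∫ ω, ∏ i, (a i + b i * X i ω) ∂μ = ∏ i, a i := by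
  classical
  have hterm : ∀ t : Finset ι, ∫ ω, (∏ i ∈ t, a i) * ∏ i ∈ tᶜ, b i * X i ω ∂μ =
      (∏ i ∈ t, a i) * (∏ i ∈ tᶜ, b i) * ∫ ω, ∏ i ∈ tᶜ, X i ω ∂μ := by
    intro t
    simp_rw [Finset.prod_mul_distrib, ← mul_assoc]
    exact integral_const_mul _ _
  simp_rw [Fintype.prod_add]
  rw [integral_finsetSum _ fun t _ => by
    simpa only [Finset.prod_mul_distrib, ← mul_assoc] using (hint tᶜ).const_mul _]
  rw [Finset.sum_eq_single Finset.univ]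
  · simp
  · intro t _ ht
    rw [hterm, horth _ ((Finset.compl_ne_univ_iff_nonempty _).mp (by simpa using ht)), mul_zero]
  · exact fun h => absurd (Finset.mem_univ _) h

/-- Azuma-type exponential moment bound: if `|Xᵢ| ≤ Kᵢ` a.s. and all products over increasing
index sequences have zero mean, then `E[exp(λ ΣXᵢ)] ≤ exp((λ²/2) ΣKᵢ²)`. -/
theorem azuma_exponential_moment {Ω : Type*} [MeasurableSpace Ω] (μ : Measure Ω)
    [IsProbabilityMeasure μ] (n : ℕ) (X : Fin n → Ω → ℝ) (K : Fin n → ℝ)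
    (hmeas : ∀ i, Measurable (X i))
    (hbdd : ∀ i, ∀ᵐ ω ∂μ, |X i ω| ≤ K i)
    (horth : ∀ s : Finset (Fin n), s.Nonempty → ∫ ω, (∏ i ∈ s, X i ω) ∂μ = 0)
    (lam : ℝ) :
    ∫ ω, Real.exp (lam * ∑ i, X i ω) ∂μ ≤ Real.exp (lam ^ 2 / 2 * ∑ i, (K i) ^ 2) := by
  set c : Fin n → ℝ := fun i => Real.cosh (lam * K i)
  set d : Fin n → ℝ := fun i => Real.sinh (lam * K i) / K i
  have hX : ∀ i, MemLp (X i) ⊤ μ := fun i =>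
    memLp_top_of_bound (hmeas i).aestronglyMeasurable (K i) (by simpa using hbdd i)
  have hchord : ∀ᵐ ω ∂μ, Real.exp (lam * ∑ i, X i ω) ≤ ∏ i, (c i + d i * X i ω) := by
    filter_upwards [ae_all_iff.mpr hbdd] with ω hω
    rw [Finset.mul_sum, Real.exp_sum]
    exact Finset.prod_le_prod (fun i _ => (Real.exp_pos _).le)
      fun i _ => Real.exp_mul_le_cosh_add_sinh_div_mul lam (K i) (X i ω) (hω i)
  calc ∫ ω, Real.exp (lam * ∑ i, X i ω) ∂μ ≤ ∫ ω, ∏ i, (c i + d i * X i ω) ∂μ :=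
        integral_mono_of_nonneg (ae_of_all _ fun ω => (Real.exp_pos _).le)
          (integrable_finset_prod_of_memLp_top _ fun i _ =>
            (memLp_const (c i)).add ((hX i).const_mul (d i)))
          hchord
    _ = ∏ i, c i := integral_prod_add_mul_eq_prod_of_integral_prod_eq_zero
        (fun s => integrable_finset_prod_of_memLp_top s fun i _ => hX i) horth c d
    _ ≤ Real.exp (lam ^ 2 / 2 * ∑ i, (K i) ^ 2) := Real.prod_cosh_mul_le_exp _ lam K
end

section
/- Let X₁,…,Xₙ satisfy |Xᵢ| ≤ Kᵢ a.s. and E[X_{i₁}⋯X_{i_k}] = 0 for all increasing index sequences. Then for all t > 0, P(|Σᵢ Xᵢ| > t) ≤ 2 exp(-t²/(2 Σᵢ Kᵢ²)). -/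
open MeasureTheory

private lemma aux_pointwise (l K x : ℝ) (hK : 0 ≤ K) (hx : |x| ≤ K) :
    Real.exp (l * x) ≤ Real.cosh (l * K) + x * (Real.sinh (l * K) / K) := by
  rcases hK.eq_or_lt with h | h
  · have hx0 : x = 0 := by simpa [← h] using hx
    simp [← h, hx0]
  · set θ : ℝ := (K + x) / (2 * K) with hθ
    have hK0 : K ≠ 0 := h.ne'
    have hθ0 : 0 ≤ θ := by
      apply div_nonneg _ (by positivity)
      nlinarith [neg_abs_le x]
    have h1θ : 0 ≤ 1 - θ := by
      have : θ ≤ 1 := by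
        rw [hθ, div_le_one (by positivity)]
        nlinarith [le_abs_self x]
      linarith
    have key := convexOn_exp.2 (Set.mem_univ (l * K)) (Set.mem_univ (-(l * K))) hθ0 h1θ
      (by ring)
    simp only [smul_eq_mul] at key
    have harg : θ * (l * K) + (1 - θ) * (-(l * K)) = l * x := by
      field_simp [hθ]
      have hKθ : K * θ * 2 = K + x := by rw [hθ]; field_simp
      linear_combination l * hKθ
    rw [harg] at key
    refine key.trans_eq ?_
    rw [Real.cosh_eq, Real.sinh_eq]
    field_simp [hθ]
    have hKθ : K * θ * 2 = K + x := by rw [hθ]; field_simp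
    clear_value θ
    linear_combination (Real.exp (l * K) - Real.exp (-(l * K))) * hKθ

private lemma aux_mgf {Ω : Type*} [MeasurableSpace Ω] (μ : Measure Ω)
    [IsProbabilityMeasure μ] (n : ℕ) (X : Fin n → Ω → ℝ) (K : Fin n → ℝ)
    (hmeas : ∀ i, Measurable (X i))
    (hbdd : ∀ i, ∀ᵐ ω ∂μ, |X i ω| ≤ K i)
    (horth : ∀ s : Finset (Fin n), s.Nonempty → ∫ ω, (∏ i ∈ s, X i ω) ∂μ = 0)
    (l : ℝ) :
    ∫ ω, Real.exp (l * ∑ i, X i ω) ∂μ ≤ Real.exp (l ^ 2 * (∑ i, (K i) ^ 2) / 2) := by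
  classical
  have hK : ∀ i, 0 ≤ K i := by
    intro i
    obtain ⟨ω, hω⟩ := (hbdd i).exists
    exact (abs_nonneg _).trans hω
  set a : Fin n → ℝ := fun i => Real.cosh (l * K i) with ha
  set b : Fin n → ℝ := fun i => Real.sinh (l * K i) / K i with hb
  have hbdd' : ∀ᵐ ω ∂μ, ∀ i, |X i ω| ≤ K i := (MeasureTheory.ae_all_iff).2 hbdd
  have hint : ∀ s : Finset (Fin n), Integrable (fun ω => ∏ i ∈ s, X i ω) μ := by
    intro s
    refine Integrable.mono' (integrable_const (∏ i ∈ s, K i))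
      ((Finset.measurable_prod s fun i _ => hmeas i).aestronglyMeasurable) ?_
    filter_upwards [hbdd'] with ω hω
    rw [Real.norm_eq_abs, Finset.abs_prod]
    exact Finset.prod_le_prod (fun i _ => abs_nonneg _) fun i _ => hω i
  set F : Ω → ℝ := fun ω => ∏ i, (a i + X i ω * b i) with hF
  have hFeq : ∀ ω, F ω = ∑ s ∈ (Finset.univ : Finset (Fin n)).powerset,
      (∏ i ∈ s, a i) * ((∏ i ∈ Finset.univ \ s, b i) *
        ∏ i ∈ Finset.univ \ s, X i ω) := by
    intro ω
    simp only [hF]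
    rw [Finset.prod_add]
    refine Finset.sum_congr rfl fun s _ => ?_
    rw [Finset.prod_mul_distrib]
    ring
  have hFint : Integrable F μ := by
    rw [show F = fun ω => ∑ s ∈ (Finset.univ : Finset (Fin n)).powerset,
      (∏ i ∈ s, a i) * ((∏ i ∈ Finset.univ \ s, b i) *
        ∏ i ∈ Finset.univ \ s, X i ω) from funext hFeq]
    exact integrable_finset_sum _ fun s _ =>
      (((hint _).const_mul _).const_mul _)
  have hFval : ∫ ω, F ω ∂μ = ∏ i, a i := by
    simp_rw [hFeq]
    rw [integral_finset_sum _ fun s _ => ((hint _).const_mul _).const_mul _]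
    rw [Finset.sum_eq_single_of_mem Finset.univ (Finset.mem_powerset_self _)]
    · simp [integral_const_mul]
    · intro s _ hs
      have hne : (Finset.univ \ s).Nonempty := by
        rw [Finset.sdiff_nonempty]
        exact fun h => hs (Finset.univ_subset_iff.mp h)
      rw [integral_const_mul, integral_const_mul, horth _ hne]
      ring
  have hexp_int : Integrable (fun ω => Real.exp (l * ∑ i, X i ω)) μ := by
    refine Integrable.mono' (integrable_const (Real.exp (|l| * ∑ i, K i)))
      (Measurable.aestronglyMeasurable (by measurability)) ?_
    filter_upwards [hbdd'] with ω hω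
    rw [Real.norm_eq_abs, Real.abs_exp, Real.exp_le_exp]
    calc l * ∑ i, X i ω ≤ |l * ∑ i, X i ω| := le_abs_self _
      _ = |l| * |∑ i, X i ω| := abs_mul _ _
      _ ≤ |l| * ∑ i, K i := by
          gcongr
          exact (Finset.abs_sum_le_sum_abs _ _).trans
            (Finset.sum_le_sum fun i _ => hω i)
  have hmono : ∫ ω, Real.exp (l * ∑ i, X i ω) ∂μ ≤ ∫ ω, F ω ∂μ := by
    refine integral_mono_ae hexp_int hFint ?_
    filter_upwards [hbdd'] with ω hω
    rw [Finset.mul_sum, Real.exp_sum]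
    exact Finset.prod_le_prod (fun i _ => (Real.exp_pos _).le)
      fun i _ => aux_pointwise l (K i) (X i ω) (hK i) (hω i)
  calc ∫ ω, Real.exp (l * ∑ i, X i ω) ∂μ ≤ ∫ ω, F ω ∂μ := hmono
    _ = ∏ i, a i := hFval
    _ ≤ ∏ i, Real.exp ((l * K i) ^ 2 / 2) :=
        Finset.prod_le_prod (fun i _ => (Real.cosh_pos _).le)
          (fun i _ => Real.cosh_le_exp_half_sq _)
    _ = Real.exp (∑ i, (l * K i) ^ 2 / 2) := by rw [Real.exp_sum]
    _ = Real.exp (l ^ 2 * (∑ i, (K i) ^ 2) / 2) := by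
        congr 1
        rw [Finset.mul_sum, Finset.sum_div]
        congr 1; ext i; ring

/-- Azuma–Hoeffding type concentration: if `|Xᵢ| ≤ Kᵢ` a.s. and all products over increasing
index sequences have zero mean, then `P(|ΣXᵢ| > t) ≤ 2 exp(-t²/(2 ΣKᵢ²))`. -/
theorem azuma_concentration {Ω : Type*} [MeasurableSpace Ω] (μ : Measure Ω)
    [IsProbabilityMeasure μ] (n : ℕ) (X : Fin n → Ω → ℝ) (K : Fin n → ℝ)
    (hmeas : ∀ i, Measurable (X i))
    (hbdd : ∀ i, ∀ᵐ ω ∂μ, |X i ω| ≤ K i)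
    (horth : ∀ s : Finset (Fin n), s.Nonempty → ∫ ω, (∏ i ∈ s, X i ω) ∂μ = 0)
    (t : ℝ) (ht : 0 < t) :
    μ {ω | t < |∑ i, X i ω|}
      ≤ ENNReal.ofReal (2 * Real.exp (-t ^ 2 / (2 * ∑ i, (K i) ^ 2))) := by
  classical
  set S : ℝ := ∑ i, (K i) ^ 2 with hS
  have hS0 : 0 ≤ S := Finset.sum_nonneg fun i _ => sq_nonneg _
  rcases hS0.eq_or_lt with h | hSpos
  · -- S = 0 : trivial bound
    rw [← h]
    simp only [mul_zero, div_zero, Real.exp_zero, mul_one]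
    calc μ {ω | t < |∑ i, X i ω|} ≤ μ Set.univ := measure_mono (Set.subset_univ _)
      _ = 1 := measure_univ
      _ ≤ ENNReal.ofReal 2 := by
          rw [show (2:ℝ) = 1 + 1 by norm_num, ENNReal.ofReal_add one_pos.le one_pos.le,
            ENNReal.ofReal_one]
          exact le_add_self
  · set l : ℝ := t / S with hl
    have hl0 : 0 ≤ l := div_nonneg ht.le hSpos.le
    set f : Ω → ℝ := fun ω => ∑ i, X i ω with hf
    have hfmeas : Measurable f := Finset.measurable_sum _ fun i _ => hmeas i
    have hbdd' : ∀ᵐ ω ∂μ, ∀ i, |X i ω| ≤ K i := (MeasureTheory.ae_all_iff).2 hbdd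
    have hint : ∀ c : ℝ, Integrable (fun ω => Real.exp (c * f ω)) μ := by
      intro c
      refine Integrable.mono' (integrable_const (Real.exp (|c| * ∑ i, K i)))
        (Measurable.aestronglyMeasurable (by measurability)) ?_
      filter_upwards [hbdd'] with ω hω
      rw [Real.norm_eq_abs, Real.abs_exp, Real.exp_le_exp]
      calc c * f ω ≤ |c * f ω| := le_abs_self _
        _ = |c| * |f ω| := abs_mul _ _
        _ ≤ |c| * ∑ i, K i := by
            gcongr
            exact (Finset.abs_sum_le_sum_abs _ _).trans
              (Finset.sum_le_sum fun i _ => hω i)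
    have hmgf : ∀ c : ℝ, ProbabilityTheory.mgf f μ c ≤ Real.exp (c ^ 2 * S / 2) :=
      fun c => aux_mgf μ n X K hmeas hbdd horth c
    have hexp : Real.exp (-l * t) * Real.exp (l ^ 2 * S / 2)
        = Real.exp (-t ^ 2 / (2 * S)) := by
      rw [← Real.exp_add]
      congr 1
      rw [hl]
      field_simp
      ring
    have hup : (μ {ω | t ≤ f ω}).toReal ≤ Real.exp (-t ^ 2 / (2 * S)) := by
      calc (μ {ω | t ≤ f ω}).toReal
          ≤ Real.exp (-l * t) * ProbabilityTheory.mgf f μ l :=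
            ProbabilityTheory.measure_ge_le_exp_mul_mgf t hl0 (hint l)
        _ ≤ Real.exp (-l * t) * Real.exp (l ^ 2 * S / 2) :=
            mul_le_mul_of_nonneg_left (hmgf l) (Real.exp_pos _).le
        _ = _ := hexp
    have hdown : (μ {ω | f ω ≤ -t}).toReal ≤ Real.exp (-t ^ 2 / (2 * S)) := by
      calc (μ {ω | f ω ≤ -t}).toReal
          ≤ Real.exp (-(-l) * (-t)) * ProbabilityTheory.mgf f μ (-l) :=
            ProbabilityTheory.measure_le_le_exp_mul_mgf (-t)
              (neg_nonpos.mpr hl0) (by simpa using hint (-l))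
        _ ≤ Real.exp (-l * t) * Real.exp (l ^ 2 * S / 2) := by
            rw [show -(-l) * (-t) = -l * t by ring]
            exact mul_le_mul_of_nonneg_left (by simpa using hmgf (-l))
              (Real.exp_pos _).le
        _ = _ := hexp
    have hsub : {ω | t < |f ω|} ⊆ {ω | t ≤ f ω} ∪ {ω | f ω ≤ -t} := by
      intro ω hω
      simp only [Set.mem_setOf_eq] at hω
      simp only [Set.mem_union, Set.mem_setOf_eq]
      rcases lt_abs.mp hω with h | h
      · exact Or.inl h.le
      · exact Or.inr (by linarith)
    have e0 : (0:ℝ) ≤ Real.exp (-t ^ 2 / (2 * S)) := (Real.exp_pos _).le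
    calc μ {ω | t < |f ω|} ≤ μ ({ω | t ≤ f ω} ∪ {ω | f ω ≤ -t}) := measure_mono hsub
      _ ≤ μ {ω | t ≤ f ω} + μ {ω | f ω ≤ -t} := measure_union_le _ _
      _ ≤ ENNReal.ofReal (Real.exp (-t ^ 2 / (2 * S)))
            + ENNReal.ofReal (Real.exp (-t ^ 2 / (2 * S))) := by
          gcongr
          · exact (ENNReal.le_ofReal_iff_toReal_le (measure_ne_top _ _) e0).mpr hup
          · exact (ENNReal.le_ofReal_iff_toReal_le (measure_ne_top _ _) e0).mpr hdown
      _ = ENNReal.ofReal (2 * Real.exp (-t ^ 2 / (2 * S))) := by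
          rw [← ENNReal.ofReal_add e0 e0]; ring_nf
end
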